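/- arXiv:1904.11135 — 4 statements merged into one kernel-verified Lean document; each statement's English description precedes it below -/
import Mathlib

section
/- For the classical Kantorovich operators K_n and every x ∈ [0,1], the fourth central moment satisfies K_n((t − x)^4; x) = (3 n^2 x^2(1−x)^2 + 5 n x(1−x)(1−2x)^2 + x^4 − 2x^3 + 2x^2 − x + 1/5)/(n+1)^4. -/
open MeasureTheory Set

noncomputable def kantorovich (n : ℕ) (f : ℝ → ℝ) (x : ℝ) : ℝ :=
  ((n : ℝ) + 1) * ∑ k ∈ Finset.range (n + 1),
    (n.choose k : ℝ) * x ^ k * (1 - x) ^ (n - k) *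
      ∫ t in ((k : ℝ) / ((n : ℝ) + 1))..(((k : ℝ) + 1) / ((n : ℝ) + 1)), f t

noncomputable def supNorm (f : ℝ → ℝ) : ℝ :=
  sSup {y | ∃ x ∈ Icc (0:ℝ) 1, y = |f x|}

noncomputable def omega1 (f : ℝ → ℝ) (h : ℝ) : ℝ :=
  sSup {d | ∃ s ∈ Icc (0:ℝ) 1, ∃ t ∈ Icc (0:ℝ) 1, |s - t| ≤ h ∧ d = |f s - f t|}

noncomputable def omega2 (f : ℝ → ℝ) (h : ℝ) : ℝ :=
  sSup {d | ∃ t δ : ℝ, 0 < δ ∧ δ ≤ h ∧ t - δ ∈ Icc (0:ℝ) 1 ∧ t + δ ∈ Icc (0:ℝ) 1 ∧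
    d = |f (t + δ) - 2 * f t + f (t - δ)|}

/-! On the `k`-th cell the integral of `(t - x) ^ 4` is
`((k + 1 - y) ^ 5 - (k - y) ^ 5) / (5 (n + 1) ^ 5)` with `y = (n + 1) x`, a quartic polynomial
in `k`. Written in the falling-factorial basis `k (k - 1) ⋯ (k - j + 1)`, it is averaged against
the binomial weights term by term, since the factorial moments of the binomial distribution are
`n (n - 1) ⋯ (n - j + 1) x ^ j`. -/

open Finset Polynomial

theorem sum_choose_mul_pow_mul_choose (n j : ℕ) (x : ℝ) :
    ∑ k ∈ range (n + 1), (n.choose k : ℝ) * x ^ k * (1 - x) ^ (n - k) * (k.choose j : ℝ)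
      = (n.choose j : ℝ) * x ^ j := by
  rcases lt_or_ge n j with hnj | hjn
  · rw [Nat.choose_eq_zero_of_lt hnj, Nat.cast_zero, zero_mul]
    refine sum_eq_zero fun k hk => ?_
    have hkj : k < j := by grind
    rw [Nat.choose_eq_zero_of_lt hkj, Nat.cast_zero, mul_zero]
  obtain ⟨m, rfl⟩ := Nat.exists_eq_add_of_le hjn
  have below : ∑ k ∈ range j,
      ((j + m).choose k : ℝ) * x ^ k * (1 - x) ^ (j + m - k) * (k.choose j : ℝ) = 0 :=
    sum_eq_zero fun k hk => by
      rw [Nat.choose_eq_zero_of_lt (Finset.mem_range.mp hk), Nat.cast_zero, mul_zero]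
  have above (i : ℕ) :
      ((j + m).choose (j + i) : ℝ) * x ^ (j + i) * (1 - x) ^ (j + m - (j + i))
          * ((j + i).choose j : ℝ)
        = ((j + m).choose j : ℝ) * x ^ j * (x ^ i * (1 - x) ^ (m - i) * (m.choose i : ℝ)) := by
    have h : ((j + m).choose (j + i) : ℝ) * ((j + i).choose j : ℝ)
        = ((j + m).choose j : ℝ) * (m.choose i : ℝ) := by
      have h := Nat.choose_mul (n := j + m) (Nat.le_add_right j i)
      rw [Nat.add_sub_cancel_left, Nat.add_sub_cancel_left] at h
      exact_mod_cast h
    rw [Nat.add_sub_add_left, pow_add]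
    linear_combination x ^ j * x ^ i * (1 - x) ^ (m - i) * h
  rw [show j + m + 1 = j + (m + 1) by omega, sum_range_add, below, zero_add,
    sum_congr rfl fun i _ => above i, ← mul_sum, ← add_pow, add_sub_cancel, one_pow, mul_one]

theorem sum_choose_mul_pow_mul_descPochhammer (n j : ℕ) (x : ℝ) :
    ∑ k ∈ range (n + 1), (n.choose k : ℝ) * x ^ k * (1 - x) ^ (n - k)
        * (descPochhammer ℝ j).eval (k : ℝ)
      = (descPochhammer ℝ j).eval (n : ℝ) * x ^ j := by
  simp only [descPochhammer_eval_eq_descFactorial, Nat.descFactorial_eq_factorial_mul_choose,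
    Nat.cast_mul]
  rw [mul_assoc, ← sum_choose_mul_pow_mul_choose n j x, mul_sum]
  exact sum_congr rfl fun k _ => by ring

theorem sum_choose_mul_pow_mul_sum_descPochhammer {ι : Type*} (s : Finset ι) (c : ι → ℝ)
    (d : ι → ℕ) (n : ℕ) (x : ℝ) :
    ∑ k ∈ range (n + 1), (n.choose k : ℝ) * x ^ k * (1 - x) ^ (n - k)
        * ∑ i ∈ s, c i * (descPochhammer ℝ (d i)).eval (k : ℝ)
      = ∑ i ∈ s, c i * (descPochhammer ℝ (d i)).eval (n : ℝ) * x ^ d i := by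
  simp only [mul_sum]
  rw [sum_comm]
  refine sum_congr rfl fun i _ => ?_
  rw [mul_assoc, ← sum_choose_mul_pow_mul_descPochhammer, mul_sum]
  exact sum_congr rfl fun k _ => by ring

theorem integral_sub_pow (a b x : ℝ) (m : ℕ) :
    ∫ t in a..b, (t - x) ^ m = ((b - x) ^ (m + 1) - (a - x) ^ (m + 1)) / (m + 1) := by
  rw [intervalIntegral.integral_comp_sub_right (· ^ m), integral_pow]

theorem integral_div_sub_pow (a b c x : ℝ) (m : ℕ) (hc : c ≠ 0) :
    ∫ t in a / c..b / c, (t - x) ^ m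
      = ((b - c * x) ^ (m + 1) - (a - c * x) ^ (m + 1)) / (m + 1) / c ^ (m + 1) := by
  rw [integral_sub_pow, div_sub' hc, div_sub' hc, div_pow, div_pow, ← sub_div, div_right_comm]

theorem eval_descPochhammer_fin_five (k : ℝ) (j : Fin 5) :
    (descPochhammer ℝ j).eval k
      = ![1, k, k * (k - 1), k * (k - 1) * (k - 2), k * (k - 1) * (k - 2) * (k - 3)] j := by
  fin_cases j <;> simp [descPochhammer_succ_right]

theorem sub_pow_five_sub_sub_pow_five_eq_sum_descPochhammer (k y : ℝ) :
    ((k + 1 - y) ^ 5 - (k - y) ^ 5) / 5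
      = ∑ j : Fin 5, ![y ^ 4 - 2 * y ^ 3 + 2 * y ^ 2 - y + 1 / 5,
          -4 * y ^ 3 + 12 * y ^ 2 - 14 * y + 6, 6 * y ^ 2 - 18 * y + 15, 8 - 4 * y, 1] j
          * (descPochhammer ℝ j).eval k := by
  simp only [Fin.sum_univ_five, eval_descPochhammer_fin_five, Matrix.cons_val]
  ring

theorem kantorovich_fourth_central_moment_general (n : ℕ) (x : ℝ) :
    kantorovich n (fun t => (t - x) ^ 4) x
      = (3 * (n : ℝ) ^ 2 * x ^ 2 * (1 - x) ^ 2
          + 5 * (n : ℝ) * x * (1 - x) * (1 - 2 * x) ^ 2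
          + x ^ 4 - 2 * x ^ 3 + 2 * x ^ 2 - x + 1 / 5) / ((n : ℝ) + 1) ^ 4 := by
  have hN : (n : ℝ) + 1 ≠ 0 := by positivity
  calc kantorovich n (fun t => (t - x) ^ 4) x
      = (∑ k ∈ range (n + 1), (n.choose k : ℝ) * x ^ k * (1 - x) ^ (n - k)
          * (((k + 1 - (n + 1) * x) ^ 5 - (k - (n + 1) * x) ^ 5) / 5)) / ((n : ℝ) + 1) ^ 4 := by
        rw [kantorovich, sum_div, mul_sum]
        refine sum_congr rfl fun k _ => ?_
        rw [integral_div_sub_pow _ _ _ _ _ hN]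
        field_simp
        ring
    _ = _ := by
        simp_rw [sub_pow_five_sub_sub_pow_five_eq_sum_descPochhammer]
        rw [sum_choose_mul_pow_mul_sum_descPochhammer]
        simp only [Fin.sum_univ_five, eval_descPochhammer_fin_five, Matrix.cons_val,
          Fin.coe_ofNat_eq_mod, Nat.reduceMod]
        ring

theorem kantorovich_fourth_central_moment (n : ℕ) (hn : 1 ≤ n) (x : ℝ)
    (hx : x ∈ Icc (0:ℝ) 1) :
    kantorovich n (fun t => (t - x) ^ 4) x
      = (3 * (n : ℝ) ^ 2 * x ^ 2 * (1 - x) ^ 2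
          + 5 * (n : ℝ) * x * (1 - x) * (1 - 2 * x) ^ 2
          + x ^ 4 - 2 * x ^ 3 + 2 * x ^ 2 - x + 1 / 5) / ((n : ℝ) + 1) ^ 4 :=
  kantorovich_fourth_central_moment_general n x
end

section
/- For the Kantorovich operators K_n and all f, g ∈ C[0,1], n ≥ 1, the non-multiplicativity is bounded by ‖K_n(fg) − K_n f · K_n g‖_∞ ≤ (1/4) ω̃(f; 2/√(2(n+1))) · ω̃(g; 2/√(2(n+1))). -/
/-!
For a positive linear functional `L` with `L 1 = 1` (here `φ ↦ K_n φ x`), `covar L f g =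
L (f g) - L f * L g` is a positive semidefinite symmetric form, so `|covar L f g|` is at most
`√(covar L f f) * √(covar L g g)` and `√(covar L φ φ)` is subadditive in `φ`.

At `τ = 2m` the modulus `ω₁(f; ·)` lies below a supporting line of its least concave majorant,
`ω₁(f; u) ≤ ω̃(f; τ) + α (u - τ)`. A sup-convolution then writes `f` as an `α`-Lipschitz `G` plus
a remainder of sup-norm at most `(ω̃(f; τ) - α τ) / 2`, so `√(covar L f f) ≤ (ω̃(f; τ) - α τ) / 2
+ α √(L (t - x)²) ≤ ω̃(f; 2m) / 2` once `L (t - x)² ≤ m²`. For `K_n` the second central moment is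
`(n x (1 - x) + (1/2 - x)² + 1/12) / (n + 1)² ≤ 1 / (2 (n + 1))`.
-/

open MeasureTheory Set

noncomputable def omegaTilde (f : ℝ → ℝ) (t : ℝ) : ℝ :=
  sSup {d | ∃ x y : ℝ, 0 ≤ x ∧ x ≤ t ∧ t ≤ y ∧ y ≤ 1 ∧ x ≠ y ∧
    d = ((t - x) * omega1 f y + (y - t) * omega1 f x) / (y - x)}

structure IsPositiveUnitalOn (L : (ℝ → ℝ) → ℝ) (s : Set ℝ) : Prop where
  map_add : ∀ φ ψ, ContinuousOn φ s → ContinuousOn ψ s → L (fun t => φ t + ψ t) = L φ + L ψ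
  map_const_mul : ∀ (c : ℝ) φ, L (fun t => c * φ t) = c * L φ
  nonneg : ∀ φ, ContinuousOn φ s → (∀ t ∈ s, 0 ≤ φ t) → 0 ≤ L φ
  map_one : L (fun _ => 1) = 1

noncomputable def covar (L : (ℝ → ℝ) → ℝ) (φ ψ : ℝ → ℝ) : ℝ :=
  L (fun t => φ t * ψ t) - L φ * L ψ

namespace IsPositiveUnitalOn

variable {L : (ℝ → ℝ) → ℝ} {s : Set ℝ} (hL : IsPositiveUnitalOn L s) {φ ψ : ℝ → ℝ}
include hL

lemma map_const (c : ℝ) : L (fun _ => c) = c := by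
  simpa [hL.map_one] using hL.map_const_mul c (fun _ => 1)

lemma map_linear_comb (a b : ℝ) (hφ : ContinuousOn φ s) (hψ : ContinuousOn ψ s) :
    L (fun t => a * φ t + b * ψ t) = a * L φ + b * L ψ := by
  rw [hL.map_add (fun t => a * φ t) (fun t => b * ψ t) (continuousOn_const.mul hφ)
    (continuousOn_const.mul hψ),
    hL.map_const_mul, hL.map_const_mul]

lemma mono (hφ : ContinuousOn φ s) (hψ : ContinuousOn ψ s) (h : ∀ t ∈ s, φ t ≤ ψ t) :
    L φ ≤ L ψ := by
  have := hL.nonneg (fun t => 1 * ψ t + (-1) * φ t) (by fun_prop)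
    (fun t ht => by linarith [h t ht])
  rw [hL.map_linear_comb 1 (-1) hψ hφ] at this
  linarith

lemma covar_self_eq (hφ : ContinuousOn φ s) (c : ℝ) :
    covar L φ φ = L (fun t => (φ t - c) ^ 2) - (L φ - c) ^ 2 := by
  have hsq : (fun t => (φ t - c) ^ 2)
      = fun t => 1 * (φ t * φ t) + 1 * ((-2 * c) * φ t + c ^ 2 * 1) := by
    ext t; ring
  rw [hsq, hL.map_linear_comb (φ := fun t => φ t * φ t) 1 1 (hφ.mul hφ) (by fun_prop),
    hL.map_linear_comb (ψ := fun _ => 1) _ _ hφ continuousOn_const, hL.map_one, covar]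
  ring

lemma covar_self_le (hφ : ContinuousOn φ s) (c : ℝ) :
    covar L φ φ ≤ L (fun t => (φ t - c) ^ 2) := by
  rw [hL.covar_self_eq hφ c]
  nlinarith [sq_nonneg (L φ - c)]

lemma covar_self_nonneg (hφ : ContinuousOn φ s) : 0 ≤ covar L φ φ := by
  rw [hL.covar_self_eq hφ (L φ), sub_self, sq, mul_zero, sub_zero]
  exact hL.nonneg _ (by fun_prop) fun t _ => sq_nonneg _

lemma covar_linear_comb_self (a b : ℝ) (hφ : ContinuousOn φ s) (hψ : ContinuousOn ψ s) :
    covar L (fun t => a * φ t + b * ψ t) (fun t => a * φ t + b * ψ t)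
      = a ^ 2 * covar L φ φ + 2 * a * b * covar L φ ψ + b ^ 2 * covar L ψ ψ := by
  have hsq : (fun t => (a * φ t + b * ψ t) * (a * φ t + b * ψ t))
      = fun t => a ^ 2 * (φ t * φ t)
          + 1 * ((2 * a * b) * (φ t * ψ t) + b ^ 2 * (ψ t * ψ t)) := by
    ext t; ring
  rw [covar, hsq, hL.map_linear_comb (φ := fun t => φ t * φ t) _ _ (hφ.mul hφ) (by fun_prop),
    hL.map_linear_comb (φ := fun t => φ t * ψ t) (ψ := fun t => ψ t * ψ t) _ _ (hφ.mul hψ)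
      (hψ.mul hψ), hL.map_linear_comb a b hφ hψ,
    covar, covar, covar]
  ring

lemma covar_sq_le (hφ : ContinuousOn φ s) (hψ : ContinuousOn ψ s) :
    covar L φ ψ ^ 2 ≤ covar L φ φ * covar L ψ ψ := by
  have hdiscr : discrim (covar L φ φ) (2 * covar L φ ψ) (covar L ψ ψ) ≤ 0 :=
    discrim_le_zero fun x => by
      have := hL.covar_self_nonneg (φ := fun t => x * φ t + 1 * ψ t) (by fun_prop)
      rw [hL.covar_linear_comb_self x 1 hφ hψ] at this
      linarith
  rw [discrim] at hdiscr
  linarith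

lemma abs_covar_le (hφ : ContinuousOn φ s) (hψ : ContinuousOn ψ s) :
    |covar L φ ψ| ≤ √(covar L φ φ) * √(covar L ψ ψ) := by
  rw [← Real.sqrt_mul (hL.covar_self_nonneg hφ)]
  exact Real.abs_le_sqrt (hL.covar_sq_le hφ hψ)

lemma sqrt_covar_self_add_le (hφ : ContinuousOn φ s) (hψ : ContinuousOn ψ s) :
    √(covar L (fun t => φ t + ψ t) (fun t => φ t + ψ t))
      ≤ √(covar L φ φ) + √(covar L ψ ψ) := by
  have hsum := hL.covar_linear_comb_self 1 1 hφ hψ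
  simp only [one_mul, one_pow] at hsum
  rw [Real.sqrt_le_iff, hsum, add_sq, Real.sq_sqrt (hL.covar_self_nonneg hφ),
    Real.sq_sqrt (hL.covar_self_nonneg hψ)]
  refine ⟨by positivity, ?_⟩
  nlinarith [le_abs_self (covar L φ ψ), hL.abs_covar_le hφ hψ]

lemma sqrt_covar_self_le_of_abs_le {p : ℝ} (hφ : ContinuousOn φ s)
    (hp : ∀ t ∈ s, |φ t| ≤ p) : √(covar L φ φ) ≤ p := by
  have hp0 : 0 ≤ p := hL.map_const p ▸
    hL.nonneg _ continuousOn_const fun t ht => (abs_nonneg _).trans (hp t ht)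
  have hvar : covar L φ φ ≤ p ^ 2 := calc
    covar L φ φ ≤ L (fun t => (φ t - 0) ^ 2) := hL.covar_self_le hφ 0
    _ ≤ L (fun _ => p ^ 2) := hL.mono (by fun_prop) continuousOn_const fun t ht => by
      rw [sub_zero, ← sq_abs]
      exact pow_le_pow_left₀ (abs_nonneg _) (hp t ht) 2
    _ = p ^ 2 := hL.map_const _
  exact Real.sqrt_le_iff.mpr ⟨hp0, hvar⟩

lemma sqrt_covar_self_le_of_lipschitzWith {K : NNReal} (hφ : LipschitzWith K φ) (x : ℝ) :
    √(covar L φ φ) ≤ K * √(L (fun t => (t - x) ^ 2)) := by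
  have hcont := hφ.continuous
  have hvar : covar L φ φ ≤ K ^ 2 * L (fun t => (t - x) ^ 2) := calc
    covar L φ φ ≤ L (fun t => (φ t - φ x) ^ 2) := hL.covar_self_le hcont.continuousOn _
    _ ≤ L (fun t => (K : ℝ) ^ 2 * (t - x) ^ 2) :=
      hL.mono (by fun_prop) (by fun_prop) fun t _ => by
        have h := hφ.dist_le_mul t x
        rw [Real.dist_eq, Real.dist_eq] at h
        rw [← sq_abs, ← sq_abs (t - x), ← mul_pow]
        exact pow_le_pow_left₀ (abs_nonneg _) h 2
    _ = K ^ 2 * L (fun t => (t - x) ^ 2) := hL.map_const_mul _ _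
  calc √(covar L φ φ) ≤ √(K ^ 2 * L (fun t => (t - x) ^ 2)) := Real.sqrt_le_sqrt hvar
    _ = K * √(L (fun t => (t - x) ^ 2)) := by
      rw [Real.sqrt_mul (sq_nonneg _), Real.sqrt_sq K.coe_nonneg]

end IsPositiveUnitalOn

lemma exists_lipschitzWith_abs_sub_le_half {X : Type*} [PseudoMetricSpace X] {f : X → ℝ}
    {s : Set X} {K : NNReal} {β : ℝ} (hs : s.Nonempty)
    (hf : ∀ u ∈ s, ∀ v ∈ s, f v - f u ≤ K * dist u v + β) :
    ∃ G : X → ℝ, LipschitzWith K G ∧ ∀ u ∈ s, |f u - G u| ≤ β / 2 := by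
  obtain ⟨u₀, hu₀⟩ := hs
  set S : X → Set ℝ := fun u => (fun v => f v - K * dist u v) '' s
  have hK := K.coe_nonneg
  have hbdd (u : X) : BddAbove (S u) := by
    refine ⟨f u₀ + β + K * dist u₀ u, ?_⟩
    rintro _ ⟨v, hv, rfl⟩
    have := mul_le_mul_of_nonneg_left (dist_triangle u₀ u v) hK
    linarith [hf u₀ hu₀ v hv]
  have hlip (u u' : X) : sSup (S u) ≤ sSup (S u') + K * dist u u' := by
    refine csSup_le ⟨_, u₀, hu₀, rfl⟩ ?_
    rintro _ ⟨v, hv, rfl⟩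
    have := mul_le_mul_of_nonneg_left (dist_triangle_left u' v u) hK
    linarith [le_csSup (hbdd u') ⟨v, hv, rfl⟩]
  refine ⟨fun u => sSup (S u) - β / 2,
    LipschitzWith.of_le_add_mul K fun u u' => by linarith [hlip u u'], fun u hu => ?_⟩
  have hle : sSup (S u) ≤ f u + β :=
    csSup_le ⟨_, u, hu, rfl⟩ fun _ ⟨v, hv, hd⟩ => hd ▸ by
      linarith [hf u hu v hv, mul_nonneg hK (dist_nonneg (x := u) (y := v))]
  have hge : f u ≤ sSup (S u) := by
    simpa using le_csSup (hbdd u) ⟨u, hu, rfl⟩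
  rw [abs_le]
  constructor <;> linarith

lemma omega1_nonneg (f : ℝ → ℝ) (h : ℝ) : 0 ≤ omega1 f h :=
  Real.sSup_nonneg fun _ ⟨_, _, _, _, _, hd⟩ => hd ▸ abs_nonneg _

section Bounded

variable {f : ℝ → ℝ} {M : ℝ} (hM : ∀ x ∈ Icc (0:ℝ) 1, |f x| ≤ M)
include hM

lemma abs_sub_le_two_mul {s t : ℝ} (hs : s ∈ Icc (0:ℝ) 1) (ht : t ∈ Icc (0:ℝ) 1) :
    |f s - f t| ≤ 2 * M := by
  linarith [abs_sub (f s) (f t), hM s hs, hM t ht]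

lemma abs_sub_le_omega1 {h s t : ℝ} (hs : s ∈ Icc (0:ℝ) 1) (ht : t ∈ Icc (0:ℝ) 1)
    (hst : |s - t| ≤ h) : |f s - f t| ≤ omega1 f h :=
  le_csSup ⟨2 * M, fun _ ⟨_, hs', _, ht', _, hd⟩ => hd ▸ abs_sub_le_two_mul hM hs' ht'⟩
    ⟨s, hs, t, ht, hst, rfl⟩

lemma omega1_le_two_mul (h : ℝ) : omega1 f h ≤ 2 * M :=
  Real.sSup_le (fun _ ⟨_, hs, _, ht, _, hd⟩ => hd ▸ abs_sub_le_two_mul hM hs ht)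
    (by linarith [abs_nonneg (f 0), hM 0 ⟨le_rfl, zero_le_one⟩])

lemma omega1_mono {h h' : ℝ} (hh : h ≤ h') : omega1 f h ≤ omega1 f h' :=
  Real.sSup_le (fun _ ⟨_, hs, _, ht, hst, hd⟩ => hd ▸ abs_sub_le_omega1 hM hs ht (hst.trans hh))
    (omega1_nonneg f h')

lemma chord_le_omegaTilde {τ x y : ℝ} (hx : 0 ≤ x) (hxτ : x ≤ τ) (hτy : τ ≤ y) (hy : y ≤ 1)
    (hxy : x ≠ y) :
    ((τ - x) * omega1 f y + (y - τ) * omega1 f x) / (y - x) ≤ omegaTilde f τ := by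
  refine le_csSup ⟨2 * M, ?_⟩ ⟨x, y, hx, hxτ, hτy, hy, hxy, rfl⟩
  rintro _ ⟨x, y, -, hxτ, hτy, -, hxy, rfl⟩
  rw [div_le_iff₀ (sub_pos.mpr (lt_of_le_of_ne (hxτ.trans hτy) hxy))]
  nlinarith [omega1_le_two_mul hM x, omega1_le_two_mul hM y]

lemma omega1_le_omegaTilde {τ : ℝ} (hτ : τ ∈ Icc (0:ℝ) 1) : omega1 f τ ≤ omegaTilde f τ := by
  rcases hτ.2.lt_or_eq with hτ1 | rfl
  · have := chord_le_omegaTilde hM (f := f) hτ.1 le_rfl hτ1.le le_rfl hτ1.ne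
    rwa [sub_self, zero_mul, zero_add, mul_div_cancel_left₀ _ (sub_pos.mpr hτ1).ne'] at this
  · simpa using chord_le_omegaTilde hM (f := f) le_rfl zero_le_one le_rfl le_rfl zero_ne_one

lemma omega1_slope_le {τ u y : ℝ} (hu : 0 ≤ u) (huτ : u < τ) (hτy : τ < y) (hy : y ≤ 1) :
    (omega1 f y - omegaTilde f τ) / (y - τ) ≤ (omegaTilde f τ - omega1 f u) / (τ - u) := by
  have hchord := chord_le_omegaTilde hM hu huτ.le hτy.le hy (huτ.trans hτy).ne
  rw [div_le_iff₀ (by linarith)] at hchord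
  rw [div_le_div_iff₀ (by linarith) (by linarith)]
  linarith

lemma exists_omega1_le_omegaTilde_add {τ : ℝ} (hτ0 : 0 < τ) (hτ1 : τ ≤ 1) :
    ∃ α : NNReal, ∀ u ∈ Icc (0:ℝ) 1, omega1 f u ≤ omegaTilde f τ + α * (u - τ) := by
  set W := omegaTilde f τ
  -- `α` is the largest slope of `ω₁` to the right of `(τ, W)`; chords bound it by left slopes
  set S := (fun y => (omega1 f y - W) / (y - τ)) '' Ioc τ 1
  have hS : BddAbove S := ⟨(W - omega1 f 0) / (τ - 0), by
    rintro _ ⟨y, hy, rfl⟩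
    exact omega1_slope_le hM le_rfl hτ0 hy.1 hy.2⟩
  have hleft (u : ℝ) (hu : u ∈ Ico 0 τ) : max (sSup S) 0 ≤ (W - omega1 f u) / (τ - u) := by
    have hnn : 0 ≤ (W - omega1 f u) / (τ - u) :=
      div_nonneg (by linarith [omega1_mono hM hu.2.le, omega1_le_omegaTilde hM ⟨hτ0.le, hτ1⟩])
        (by linarith [hu.2])
    refine max_le (Real.sSup_le ?_ hnn) hnn
    rintro _ ⟨y, hy, rfl⟩
    exact omega1_slope_le hM hu.1 hu.2 hy.1 hy.2
  refine ⟨(sSup S).toNNReal, fun u hu => ?_⟩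
  rw [Real.coe_toNNReal']
  rcases lt_trichotomy u τ with huτ | rfl | hτu
  · have := hleft u ⟨hu.1, huτ⟩
    rw [le_div_iff₀ (sub_pos.mpr huτ)] at this
    linarith
  · simpa using omega1_le_omegaTilde hM hu
  · have := (le_csSup hS ⟨u, ⟨hτu, hu.2⟩, rfl⟩).trans (le_max_left _ (0:ℝ))
    rw [div_le_iff₀ (sub_pos.mpr hτu)] at this
    linarith

lemma exists_lipschitzWith_abs_sub_le_omegaTilde {τ : ℝ} (hτ0 : 0 < τ) (hτ1 : τ ≤ 1) :
    ∃ α : NNReal, ∃ G : ℝ → ℝ, LipschitzWith α G ∧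
      ∀ u ∈ Icc (0:ℝ) 1, |f u - G u| ≤ (omegaTilde f τ - α * τ) / 2 := by
  obtain ⟨α, hα⟩ := exists_omega1_le_omegaTilde_add hM hτ0 hτ1
  refine ⟨α, exists_lipschitzWith_abs_sub_le_half ⟨0, le_rfl, zero_le_one⟩
    fun u hu v hv => ?_⟩
  have hvu : |v - u| ∈ Icc (0:ℝ) 1 :=
    ⟨abs_nonneg _, abs_sub_le_iff.mpr ⟨by linarith [hv.2, hu.1], by linarith [hu.2, hv.1]⟩⟩
  calc f v - f u ≤ |f v - f u| := le_abs_self _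
    _ ≤ omega1 f |v - u| := abs_sub_le_omega1 hM hv hu le_rfl
    _ ≤ omegaTilde f τ + α * (|v - u| - τ) := hα _ hvu
    _ = α * dist u v + (omegaTilde f τ - α * τ) := by rw [Real.dist_eq, abs_sub_comm]; ring

end Bounded

theorem IsPositiveUnitalOn.sqrt_covar_self_le_omegaTilde {L : (ℝ → ℝ) → ℝ}
    (hL : IsPositiveUnitalOn L (Icc 0 1)) {f : ℝ → ℝ} (hf : ContinuousOn f (Icc 0 1))
    {x m : ℝ} (hm0 : 0 < m) (hm1 : 2 * m ≤ 1) (hmom : L (fun t => (t - x) ^ 2) ≤ m ^ 2) :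
    √(covar L f f) ≤ omegaTilde f (2 * m) / 2 := by
  obtain ⟨M, hM⟩ := isCompact_Icc.exists_bound_of_continuousOn hf
  obtain ⟨α, G, hG, hfG⟩ :=
    exists_lipschitzWith_abs_sub_le_omegaTilde (f := f) hM (by linarith) hm1
  have hfG_cont : ContinuousOn (fun t => f t - G t) (Icc 0 1) :=
    hf.sub hG.continuous.continuousOn
  have hmom' : √(L (fun t => (t - x) ^ 2)) ≤ m := Real.sqrt_le_iff.mpr ⟨hm0.le, hmom⟩
  calc √(covar L f f)
      = √(covar L (fun t => (f t - G t) + G t) (fun t => (f t - G t) + G t)) := by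
        simp only [sub_add_cancel]
    _ ≤ √(covar L (fun t => f t - G t) (fun t => f t - G t)) + √(covar L G G) :=
        hL.sqrt_covar_self_add_le hfG_cont hG.continuous.continuousOn
    _ ≤ (omegaTilde f (2 * m) - α * (2 * m)) / 2 + α * √(L (fun t => (t - x) ^ 2)) :=
        add_le_add (hL.sqrt_covar_self_le_of_abs_le hfG_cont hfG)
          (hL.sqrt_covar_self_le_of_lipschitzWith hG x)
    _ ≤ (omegaTilde f (2 * m) - α * (2 * m)) / 2 + α * m := by gcongr
    _ = omegaTilde f (2 * m) / 2 := by ring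

section Kantorovich

variable (n : ℕ) {x : ℝ}

lemma sum_bernstein_eval :
    ∑ k ∈ Finset.range (n + 1), (n.choose k : ℝ) * x ^ k * (1 - x) ^ (n - k) = 1 := by
  simpa [bernsteinPolynomial, Polynomial.eval_finsetSum] using
    congrArg (Polynomial.eval x) (bernsteinPolynomial.sum ℝ n)

lemma sum_mul_bernstein_eval :
    ∑ k ∈ Finset.range (n + 1), (k : ℝ) * ((n.choose k : ℝ) * x ^ k * (1 - x) ^ (n - k))
      = n * x := by
  simpa [bernsteinPolynomial, Polynomial.eval_finsetSum] using
    congrArg (Polynomial.eval x) (bernsteinPolynomial.sum_smul ℝ n)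

lemma sum_sq_mul_bernstein_eval :
    ∑ k ∈ Finset.range (n + 1),
        ((n : ℝ) * x - k) ^ 2 * ((n.choose k : ℝ) * x ^ k * (1 - x) ^ (n - k))
      = n * x * (1 - x) := by
  simpa [bernsteinPolynomial, Polynomial.eval_finsetSum] using
    congrArg (Polynomial.eval x) (bernsteinPolynomial.variance ℝ n)

variable {n}

lemma kantorovich_node_le (k : ℕ) : (k : ℝ) / (n + 1) ≤ (k + 1) / (n + 1) := by
  gcongr; linarith

lemma Icc_kantorovich_node_subset {k : ℕ} (hk : k ∈ Finset.range (n + 1)) :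
    Icc ((k : ℝ) / (n + 1)) ((k + 1) / (n + 1)) ⊆ Icc 0 1 := by
  have hkn : (k : ℝ) + 1 ≤ n + 1 := by exact_mod_cast Finset.mem_range.mp hk
  exact Icc_subset_Icc (by positivity) ((div_le_one (by positivity)).mpr hkn)

lemma isPositiveUnitalOn_kantorovich (hx : x ∈ Icc (0:ℝ) 1) :
    IsPositiveUnitalOn (fun φ => kantorovich n φ x) (Icc 0 1) where
  map_add φ ψ hφ hψ := by
    have hint {χ : ℝ → ℝ} (hχ : ContinuousOn χ (Icc 0 1)) {k : ℕ}
        (hk : k ∈ Finset.range (n + 1)) :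
        IntervalIntegrable χ volume ((k : ℝ) / (n + 1)) ((k + 1) / (n + 1)) :=
      (hχ.mono (uIcc_of_le (kantorovich_node_le k) ▸ Icc_kantorovich_node_subset hk)
        ).intervalIntegrable
    simp only [kantorovich, ← mul_add, ← Finset.sum_add_distrib]
    congr 1
    refine Finset.sum_congr rfl fun k hk => ?_
    rw [intervalIntegral.integral_add (hint hφ hk) (hint hψ hk), mul_add]
  map_const_mul c φ := by
    simp only [kantorovich, intervalIntegral.integral_const_mul, Finset.mul_sum]
    congr 1
    ext k
    ring
  nonneg φ _ hφ := by
    obtain ⟨hx0, hx1⟩ := hx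
    have hx1' : 0 ≤ 1 - x := by linarith
    refine mul_nonneg (by positivity) (Finset.sum_nonneg fun k hk => mul_nonneg (by positivity)
      (intervalIntegral.integral_nonneg (kantorovich_node_le k) fun t ht => ?_))
    exact hφ t (Icc_kantorovich_node_subset hk ht)
  map_one := by
    simp only [kantorovich, intervalIntegral.integral_const, smul_eq_mul, mul_one, ← sub_div,
      add_sub_cancel_left, ← Finset.sum_mul, sum_bernstein_eval]
    field_simp

lemma integral_sq_sub_kantorovich_node (k : ℕ) (x : ℝ) :
    ∫ t in ((k : ℝ) / (n + 1))..((k + 1) / (n + 1)), (t - x) ^ 2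
      = (((k : ℝ) - (n + 1) * x + 1 / 2) ^ 2 + 1 / 12) / (n + 1) ^ 3 := by
  rw [intervalIntegral.integral_comp_sub_right (fun t => t ^ 2) x, integral_pow,
    div_sub' (by positivity), div_sub' (by positivity), div_pow, div_pow]
  field_simp
  ring

lemma kantorovich_sq_sub_self (x : ℝ) :
    kantorovich n (fun t => (t - x) ^ 2) x
      = (n * x * (1 - x) + (1 / 2 - x) ^ 2 + 1 / 12) / (n + 1) ^ 2 := by
  set b : ℕ → ℝ := fun k => (n.choose k : ℝ) * x ^ k * (1 - x) ^ (n - k)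
  -- `k - (n + 1) x + 1/2 = (k - n x) + (1/2 - x)`, and the Bernstein mean of `k` is `n x`
  have hterm (k : ℕ) : b k * ∫ t in ((k : ℝ) / (n + 1))..((k + 1) / (n + 1)), (t - x) ^ 2
      = ((n * x - k) ^ 2 * b k + (1 - 2 * x) * (k * b k)
          + ((1 / 2 - x) ^ 2 + 1 / 12 - n * x * (1 - 2 * x)) * b k) / (n + 1) ^ 3 := by
    rw [integral_sq_sub_kantorovich_node]
    ring
  simp only [kantorovich]
  rw [Finset.sum_congr rfl fun k _ => hterm k, ← Finset.sum_div, Finset.sum_add_distrib,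
    Finset.sum_add_distrib, ← Finset.mul_sum, ← Finset.mul_sum]
  simp only [b]
  rw [sum_sq_mul_bernstein_eval, sum_mul_bernstein_eval, sum_bernstein_eval]
  field_simp
  ring

lemma kantorovich_sq_sub_self_le (hx : x ∈ Icc (0:ℝ) 1) :
    kantorovich n (fun t => (t - x) ^ 2) x ≤ 1 / (2 * (n + 1)) := by
  have hvar : x * (1 - x) ≤ 1 / 4 := by nlinarith [sq_nonneg (2 * x - 1)]
  have hnum : 2 * (n * x * (1 - x) + (1 / 2 - x) ^ 2 + 1 / 12) ≤ n + 1 := by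
    nlinarith [mul_nonneg (Nat.cast_nonneg n) (sub_nonneg.mpr hvar),
      mul_nonneg hx.1 (sub_nonneg.mpr hx.2)]
  rw [kantorovich_sq_sub_self, div_le_div_iff₀ (by positivity) (by positivity)]
  nlinarith [mul_le_mul_of_nonneg_right hnum (by positivity : (0:ℝ) ≤ n + 1)]

end Kantorovich

theorem kantorovich_chebyshev_gruss (n : ℕ) (hn : 1 ≤ n)
    (f g : ℝ → ℝ) (hf : ContinuousOn f (Icc (0:ℝ) 1)) (hg : ContinuousOn g (Icc (0:ℝ) 1)) :
    supNorm (fun x => kantorovich n (fun t => f t * g t) x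
        - kantorovich n f x * kantorovich n g x)
      ≤ 1 / 4 * omegaTilde f (2 * Real.sqrt (1 / (2 * ((n : ℝ) + 1))))
          * omegaTilde g (2 * Real.sqrt (1 / (2 * ((n : ℝ) + 1)))) := by
  set m := √(1 / (2 * ((n : ℝ) + 1)))
  have hm0 : 0 < m := Real.sqrt_pos.mpr (by positivity)
  have hm1 : 2 * m ≤ 1 := by
    have hn' : (1 : ℝ) ≤ n := by exact_mod_cast hn
    have : m ≤ 1 / 2 := Real.sqrt_le_iff.mpr
      ⟨by norm_num, by rw [div_le_iff₀ (by positivity)]; nlinarith⟩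
    linarith
  have hσ {φ : ℝ → ℝ} (hφ : ContinuousOn φ (Icc 0 1)) {x : ℝ} (hx : x ∈ Icc (0:ℝ) 1) :
      √(covar (fun ψ => kantorovich n ψ x) φ φ) ≤ omegaTilde φ (2 * m) / 2 :=
    (isPositiveUnitalOn_kantorovich hx).sqrt_covar_self_le_omegaTilde hφ hm0 hm1
      (by rw [Real.sq_sqrt (by positivity)]; exact kantorovich_sq_sub_self_le hx)
  refine csSup_le ⟨_, 0, ⟨le_rfl, zero_le_one⟩, rfl⟩ ?_
  rintro _ ⟨x, hx, rfl⟩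
  calc |covar (fun ψ => kantorovich n ψ x) f g|
      ≤ √(covar (fun ψ => kantorovich n ψ x) f f) * √(covar (fun ψ => kantorovich n ψ x) g g) :=
        (isPositiveUnitalOn_kantorovich hx).abs_covar_le hf hg
    _ ≤ omegaTilde f (2 * m) / 2 * (omegaTilde g (2 * m) / 2) :=
        mul_le_mul (hσ hf hx) (hσ hg hx) (Real.sqrt_nonneg _)
          ((Real.sqrt_nonneg _).trans (hσ hf hx))
    _ = 1 / 4 * omegaTilde f (2 * m) * omegaTilde g (2 * m) := by ring
end

section
/- Let f, g ∈ C¹[0,1] and n ≥ 1. Then for all x ∈ [0,1], |n[K_n(fg;x) − K_n(f;x)K_n(g;x)]| ≤ 2[x(1−x) + 1/(24(n+1))]·‖f′‖_∞‖g′‖_∞. -/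
/-!
The Kantorovich operator is an expectation: `K_n(u; x) = 𝔼[u(T)]`, where `T` is drawn by choosing
the cell `(k/(n+1), (k+1)/(n+1)]` with the Bernstein weight `b_{n,k}(x)` and then a uniform point
in it. The Grüss difference `K_n(fg) - K_n(f) K_n(g)` is thus the covariance of `f(T)` and `g(T)`.
By Cauchy–Schwarz it is at most `√(Var f(T) · Var g(T))`, and since the variance is the least
mean-square deviation from a constant, `Var f(T) ≤ 𝔼(f(T) - f(𝔼T))² ≤ ‖f'‖² Var T`. The Bernstein
moment identities give `Var T = (n x (1 - x) + 1/12) / (n + 1)²`, so that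
`n Var T ≤ x (1 - x) + 1 / (12 (n + 1))`.
-/

open MeasureTheory Set

open ProbabilityTheory
open scoped NNReal InnerProductSpace

namespace ProbabilityTheory

variable {Ω : Type*} {mΩ : MeasurableSpace Ω} {μ : Measure Ω} {X Y : Ω → ℝ}

lemma covariance_eq_inner_toLp [IsFiniteMeasure μ] (hX : MemLp X 2 μ) (hY : MemLp Y 2 μ) :
    cov[X, Y; μ] = ⟪(hX.sub (memLp_const μ[X])).toLp, (hY.sub (memLp_const μ[Y])).toLp⟫_ℝ := by
  rw [L2.inner_def, covariance]
  refine integral_congr_ae ?_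
  filter_upwards [(hX.sub (memLp_const μ[X])).coeFn_toLp,
    (hY.sub (memLp_const μ[Y])).coeFn_toLp] with ω hXω hYω
  simp [hXω, hYω, mul_comm]

lemma covariance_sq_le_variance_mul_variance [IsFiniteMeasure μ] (hX : MemLp X 2 μ)
    (hY : MemLp Y 2 μ) : cov[X, Y; μ] ^ 2 ≤ Var[X; μ] * Var[Y; μ] := by
  rw [← covariance_self hX.aemeasurable, ← covariance_self hY.aemeasurable,
    covariance_eq_inner_toLp hX hY, covariance_eq_inner_toLp hX hX,
    covariance_eq_inner_toLp hY hY, sq]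
  exact real_inner_mul_inner_self_le _ _

lemma variance_le_integral_sub_sq [IsProbabilityMeasure μ] (hX : AEStronglyMeasurable X μ)
    (c : ℝ) : Var[X; μ] ≤ ∫ ω, (X ω - c) ^ 2 ∂μ := by
  rw [← variance_sub_const hX c]
  exact variance_le_expectation_sq (hX.sub aestronglyMeasurable_const)

lemma variance_comp_le_of_lipschitzOnWith [IsProbabilityMeasure μ] {s : Set ℝ}
    (hs : Convex ℝ s) (hsc : IsClosed s) {T : Ω → ℝ} (hTs : ∀ᵐ ω ∂μ, T ω ∈ s)
    (hT : MemLp T 2 μ) {f : ℝ → ℝ} {K : ℝ≥0} (hf : LipschitzOnWith K f s)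
    (hfT : MemLp (fun ω ↦ f (T ω)) 2 μ) :
    Var[fun ω ↦ f (T ω); μ] ≤ K ^ 2 * Var[T; μ] := by
  have hm : μ[T] ∈ s := hs.integral_mem hsc hTs (hT.integrable one_le_two)
  calc Var[fun ω ↦ f (T ω); μ] ≤ ∫ ω, (f (T ω) - f μ[T]) ^ 2 ∂μ :=
        variance_le_integral_sub_sq hfT.aestronglyMeasurable _
    _ ≤ ∫ ω, K ^ 2 * (T ω - μ[T]) ^ 2 ∂μ := by
        refine integral_mono_ae ?_ ?_ ?_
        · exact (hfT.sub (memLp_const _)).integrable_sq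
        · exact (hT.sub (memLp_const _)).integrable_sq.const_mul _
        · filter_upwards [hTs] with ω hω
          have hlip := hf.dist_le_mul _ hω _ hm
          rw [Real.dist_eq, Real.dist_eq] at hlip
          rw [← sq_abs, ← sq_abs (T ω - _), ← mul_pow]
          exact pow_le_pow_left₀ (abs_nonneg _) hlip 2
    _ = K ^ 2 * Var[T; μ] := by
        rw [integral_const_mul, variance_eq_integral hT.aemeasurable]

lemma abs_covariance_comp_le_of_lipschitzOnWith [IsProbabilityMeasure μ] {s : Set ℝ}
    (hs : Convex ℝ s) (hsc : IsClosed s) {T : Ω → ℝ} (hTs : ∀ᵐ ω ∂μ, T ω ∈ s)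
    (hT : MemLp T 2 μ) {f g : ℝ → ℝ} {Kf Kg : ℝ≥0} (hf : LipschitzOnWith Kf f s)
    (hg : LipschitzOnWith Kg g s) (hfT : MemLp (fun ω ↦ f (T ω)) 2 μ)
    (hgT : MemLp (fun ω ↦ g (T ω)) 2 μ) :
    |cov[fun ω ↦ f (T ω), fun ω ↦ g (T ω); μ]| ≤ Kf * Kg * Var[T; μ] := by
  refine abs_le_of_sq_le_sq ?_ (mul_nonneg (by positivity) (variance_nonneg _ _))
  calc cov[fun ω ↦ f (T ω), fun ω ↦ g (T ω); μ] ^ 2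
      ≤ Var[fun ω ↦ f (T ω); μ] * Var[fun ω ↦ g (T ω); μ] :=
        covariance_sq_le_variance_mul_variance hfT hgT
    _ ≤ (Kf ^ 2 * Var[T; μ]) * (Kg ^ 2 * Var[T; μ]) :=
        mul_le_mul (variance_comp_le_of_lipschitzOnWith hs hsc hTs hT hf hfT)
          (variance_comp_le_of_lipschitzOnWith hs hsc hTs hT hg hgT) (variance_nonneg _ _)
          (mul_nonneg (by positivity) (variance_nonneg _ _))
    _ = (Kf * Kg * Var[T; μ]) ^ 2 := by ring

end ProbabilityTheory

section Bernstein

open Polynomial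
open Finset (range mul_sum sum_congr sum_sub_distrib sum_add_distrib)

variable {R : Type*} [CommRing R] (n : ℕ) (x : R)

lemma sum_eval_bernsteinPolynomial :
    ∑ k ∈ range (n + 1), (bernsteinPolynomial R n k).eval x = 1 := by
  simpa [eval_finsetSum] using congrArg (eval x) (bernsteinPolynomial.sum R n)

lemma sum_mul_eval_bernsteinPolynomial :
    ∑ k ∈ range (n + 1), (k : R) * (bernsteinPolynomial R n k).eval x = n * x := by
  simpa [eval_finsetSum, nsmul_eq_mul] using congrArg (eval x) (bernsteinPolynomial.sum_smul R n)

lemma sum_sq_mul_eval_bernsteinPolynomial :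
    ∑ k ∈ range (n + 1), (k : R) ^ 2 * (bernsteinPolynomial R n k).eval x
      = n * x * (1 - x) + (n * x) ^ 2 := by
  have h := congrArg (eval x) (bernsteinPolynomial.variance R n)
  simp only [eval_finsetSum, eval_mul, eval_pow, eval_sub, eval_X, eval_natCast,
    eval_one, nsmul_eq_mul] at h
  have hexp : ∑ k ∈ range (n + 1), ((n : R) * x - k) ^ 2 * (bernsteinPolynomial R n k).eval x
      = ∑ k ∈ range (n + 1), (k : R) ^ 2 * (bernsteinPolynomial R n k).eval x
        - 2 * (n * x) * ∑ k ∈ range (n + 1), (k : R) * (bernsteinPolynomial R n k).eval x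
        + (n * x) ^ 2 * ∑ k ∈ range (n + 1), (bernsteinPolynomial R n k).eval x := by
    simp only [mul_sum, ← sum_sub_distrib, ← sum_add_distrib]
    exact sum_congr rfl fun k _ ↦ by ring
  rw [hexp, sum_mul_eval_bernsteinPolynomial, sum_eval_bernsteinPolynomial] at h
  linear_combination h

end Bernstein

lemma ContinuousOn.memLp_of_ae_mem {α E : Type*} [TopologicalSpace α] [MeasurableSpace α]
    [OpensMeasurableSpace α] [NormedAddCommGroup E] {μ : Measure α} [IsFiniteMeasure μ]
    {s : Set α} {u : α → E} (hu : ContinuousOn u s) (hs : IsCompact s) (hsm : MeasurableSet s)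
    (hμs : ∀ᵐ t ∂μ, t ∈ s) (p : ENNReal) : MemLp u p μ := by
  obtain ⟨C, hC⟩ := hs.exists_bound_of_continuousOn hu
  refine MemLp.of_bound ?_ C (hμs.mono hC)
  rw [← Measure.restrict_eq_self_of_ae_mem hμs]
  exact hu.aestronglyMeasurable_of_isCompact hs hsm

section KantorovichMeasure

open Polynomial
open Finset (range mul_sum sum_congr sum_sub_distrib sum_add_distrib)

variable {n : ℕ} {x : ℝ}

lemma kantorovich_eq_sum (n : ℕ) (u : ℝ → ℝ) (x : ℝ) :
    kantorovich n u x = ∑ k ∈ range (n + 1), (bernsteinPolynomial ℝ n k).eval x *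
      (((n : ℝ) + 1) * ∫ t in ((k : ℝ) / ((n : ℝ) + 1))..(((k : ℝ) + 1) / ((n : ℝ) + 1)), u t) := by
  rw [kantorovich, mul_sum]
  exact sum_congr rfl fun k _ ↦ by simp only [bernsteinPolynomial, eval_mul, eval_pow, eval_sub,
    eval_X, eval_one, eval_natCast]; ring

lemma Icc_div_subset_unitInterval {k : ℕ} (hk : k ≤ n) :
    Icc ((k : ℝ) / ((n : ℝ) + 1)) (((k : ℝ) + 1) / ((n : ℝ) + 1)) ⊆ Icc 0 1 := by
  have hk' : (k : ℝ) ≤ n := Nat.cast_le.mpr hk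
  exact Icc_subset_Icc (by positivity) ((div_le_one (by positivity)).mpr (by linarith))

lemma eval_bernsteinPolynomial_nonneg (hx : x ∈ Icc (0 : ℝ) 1) (k : ℕ) :
    0 ≤ (bernsteinPolynomial ℝ n k).eval x := by
  have hx₀ := hx.1
  have hx₁ : 0 ≤ 1 - x := sub_nonneg.mpr hx.2
  simp only [bernsteinPolynomial, eval_mul, eval_pow, eval_sub, eval_X, eval_one, eval_natCast]
  positivity

noncomputable def kantorovichMeasure (n : ℕ) (x : ℝ) : Measure ℝ :=
  ∑ k ∈ range (n + 1), ENNReal.ofReal (((n : ℝ) + 1) * (bernsteinPolynomial ℝ n k).eval x) •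
    volume.restrict (Ioc ((k : ℝ) / ((n : ℝ) + 1)) (((k : ℝ) + 1) / ((n : ℝ) + 1)))

lemma isProbabilityMeasure_kantorovichMeasure (hx : x ∈ Icc (0 : ℝ) 1) :
    IsProbabilityMeasure (kantorovichMeasure n x) := by
  constructor
  have hN : (0 : ℝ) < n + 1 := by positivity
  simp only [kantorovichMeasure, Measure.coe_finsetSum, Finset.sum_apply, Measure.smul_apply,
    Measure.restrict_apply_univ, Real.volume_Ioc, smul_eq_mul]
  have hterm : ∀ k : ℕ, ((n : ℝ) + 1) * (bernsteinPolynomial ℝ n k).eval x *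
      (((k : ℝ) + 1) / ((n : ℝ) + 1) - (k : ℝ) / ((n : ℝ) + 1))
        = (bernsteinPolynomial ℝ n k).eval x :=
    fun k ↦ by field_simp; ring
  simp_rw [← ENNReal.ofReal_mul (mul_nonneg hN.le (eval_bernsteinPolynomial_nonneg hx _)), hterm]
  rw [← ENNReal.ofReal_sum_of_nonneg fun k _ ↦ eval_bernsteinPolynomial_nonneg hx k,
    sum_eval_bernsteinPolynomial, ENNReal.ofReal_one]

lemma kantorovichMeasure_compl_unitInterval :
    kantorovichMeasure n x (Icc 0 1)ᶜ = 0 := by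
  simp only [kantorovichMeasure, Measure.coe_finsetSum, Finset.sum_apply, Measure.smul_apply,
    smul_eq_mul]
  refine Finset.sum_eq_zero fun k hk ↦ ?_
  have hsub := Ioc_subset_Icc_self.trans
    (Icc_div_subset_unitInterval (Nat.lt_succ_iff.mp (Finset.mem_range.mp hk)))
  rw [Measure.restrict_apply measurableSet_Icc.compl,
    (disjoint_compl_left_iff_subset.mpr hsub).inter_eq, measure_empty, mul_zero]

lemma ae_mem_unitInterval_kantorovichMeasure : ∀ᵐ t ∂kantorovichMeasure n x, t ∈ Icc 0 1 :=
  measure_eq_zero_iff_ae_notMem.mp kantorovichMeasure_compl_unitInterval |>.mono fun _ h ↦ by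
    simpa using h

lemma integral_kantorovichMeasure (hx : x ∈ Icc (0 : ℝ) 1) {u : ℝ → ℝ}
    (hu : ContinuousOn u (Icc 0 1)) :
    ∫ t, u t ∂kantorovichMeasure n x = kantorovich n u x := by
  have hint : ∀ k ∈ range (n + 1),
      IntegrableOn u (Ioc ((k : ℝ) / ((n : ℝ) + 1)) (((k : ℝ) + 1) / ((n : ℝ) + 1))) := fun k hk ↦
    ((hu.mono (Icc_div_subset_unitInterval (Nat.lt_succ_iff.mp (Finset.mem_range.mp hk))))
      |>.integrableOn_Icc).mono_set Ioc_subset_Icc_self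
  rw [kantorovichMeasure, integral_finsetSum_measure
    fun k hk ↦ (hint k hk).smul_measure ENNReal.ofReal_ne_top, kantorovich_eq_sum]
  refine sum_congr rfl fun k _ ↦ ?_
  have hle : (k : ℝ) / ((n : ℝ) + 1) ≤ ((k : ℝ) + 1) / ((n : ℝ) + 1) := by gcongr; linarith
  rw [integral_smul_measure, ENNReal.toReal_ofReal
    (mul_nonneg (by positivity) (eval_bernsteinPolynomial_nonneg hx k)),
    intervalIntegral.integral_of_le hle, smul_eq_mul]
  ring

lemma memLp_kantorovichMeasure (hx : x ∈ Icc (0 : ℝ) 1) {u : ℝ → ℝ}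
    (hu : ContinuousOn u (Icc 0 1)) (p : ENNReal) : MemLp u p (kantorovichMeasure n x) :=
  have := isProbabilityMeasure_kantorovichMeasure (n := n) hx
  hu.memLp_of_ae_mem isCompact_Icc measurableSet_Icc ae_mem_unitInterval_kantorovichMeasure p

lemma kantorovich_id (n : ℕ) (x : ℝ) :
    kantorovich n (fun t ↦ t) x = (n * x + 1 / 2) / ((n : ℝ) + 1) := by
  have hN : (n : ℝ) + 1 ≠ 0 := by positivity
  have hterm : ∀ k : ℕ, (bernsteinPolynomial ℝ n k).eval x *
      (((n : ℝ) + 1) * ∫ t in ((k : ℝ) / ((n : ℝ) + 1))..(((k : ℝ) + 1) / ((n : ℝ) + 1)), t)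
      = (1 / ((n : ℝ) + 1)) * ((k : ℝ) * (bernsteinPolynomial ℝ n k).eval x)
        + (1 / (2 * ((n : ℝ) + 1))) * (bernsteinPolynomial ℝ n k).eval x := fun k ↦ by
    rw [integral_id]; field_simp; ring
  rw [kantorovich_eq_sum, sum_congr rfl fun k _ ↦ hterm k, sum_add_distrib, ← mul_sum, ← mul_sum,
    sum_mul_eval_bernsteinPolynomial, sum_eval_bernsteinPolynomial]
  field_simp

lemma kantorovich_sq (n : ℕ) (x : ℝ) :
    kantorovich n (fun t ↦ t ^ 2) x
      = (n * x * (1 - x) + (n * x) ^ 2 + n * x + 1 / 3) / ((n : ℝ) + 1) ^ 2 := by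
  have hN : (n : ℝ) + 1 ≠ 0 := by positivity
  have hterm : ∀ k : ℕ, (bernsteinPolynomial ℝ n k).eval x *
      (((n : ℝ) + 1) * ∫ t in ((k : ℝ) / ((n : ℝ) + 1))..(((k : ℝ) + 1) / ((n : ℝ) + 1)), t ^ 2)
      = (1 / ((n : ℝ) + 1) ^ 2) * ((k : ℝ) ^ 2 * (bernsteinPolynomial ℝ n k).eval x)
        + (1 / ((n : ℝ) + 1) ^ 2) * ((k : ℝ) * (bernsteinPolynomial ℝ n k).eval x)
        + (1 / (3 * ((n : ℝ) + 1) ^ 2)) * (bernsteinPolynomial ℝ n k).eval x := fun k ↦ by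
    rw [integral_pow, div_pow, div_pow, ← sub_div]; field_simp; ring
  rw [kantorovich_eq_sum, sum_congr rfl fun k _ ↦ hterm k, sum_add_distrib, sum_add_distrib,
    ← mul_sum, ← mul_sum, ← mul_sum, sum_sq_mul_eval_bernsteinPolynomial,
    sum_mul_eval_bernsteinPolynomial, sum_eval_bernsteinPolynomial]
  field_simp

lemma variance_id_kantorovichMeasure (hx : x ∈ Icc (0 : ℝ) 1) :
    Var[id; kantorovichMeasure n x] = (n * x * (1 - x) + 1 / 12) / ((n : ℝ) + 1) ^ 2 := by
  have := isProbabilityMeasure_kantorovichMeasure (n := n) hx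
  rw [variance_eq_sub (memLp_kantorovichMeasure hx continuousOn_id 2)]
  simp only [Pi.pow_apply, id]
  rw [integral_kantorovichMeasure (u := fun t ↦ t ^ 2) hx (continuousOn_id.pow 2),
    integral_kantorovichMeasure (u := fun t ↦ t) hx continuousOn_id, kantorovich_sq, kantorovich_id]
  field_simp
  ring

end KantorovichMeasure

section SupNorm

lemma supNorm_nonneg (u : ℝ → ℝ) : 0 ≤ supNorm u :=
  Real.sSup_nonneg fun _ ⟨_, _, hy⟩ ↦ hy ▸ abs_nonneg _

lemma abs_le_supNorm {u : ℝ → ℝ} (hu : ContinuousOn u (Icc 0 1)) {t : ℝ} (ht : t ∈ Icc 0 1) :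
    |u t| ≤ supNorm u := by
  obtain ⟨C, hC⟩ := isCompact_Icc.exists_bound_of_continuousOn hu
  exact le_csSup ⟨C, fun _ ⟨s, hs, hy⟩ ↦ hy ▸ hC s hs⟩ ⟨t, ht, rfl⟩

lemma lipschitzOnWith_supNorm_derivWithin {f : ℝ → ℝ} (hf : ContDiffOn ℝ 1 f (Icc 0 1)) :
    LipschitzOnWith (supNorm (derivWithin f (Icc 0 1))).toNNReal f (Icc 0 1) := by
  refine (convex_Icc 0 1).lipschitzOnWith_of_nnnorm_derivWithin_le
    (hf.differentiableOn one_ne_zero) fun t ht ↦ ?_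
  rw [← NNReal.coe_le_coe, coe_nnnorm, Real.coe_toNNReal _ (supNorm_nonneg _)]
  exact abs_le_supNorm (hf.continuousOn_derivWithin (uniqueDiffOn_Icc one_pos) le_rfl) ht

end SupNorm

theorem kantorovich_gruss_C1_pointwise_general (n : ℕ)
    (f g : ℝ → ℝ) (hf : ContDiffOn ℝ 1 f (Icc (0:ℝ) 1)) (hg : ContDiffOn ℝ 1 g (Icc (0:ℝ) 1))
    (x : ℝ) (hx : x ∈ Icc (0:ℝ) 1) :
    |(n : ℝ) * (kantorovich n (fun t => f t * g t) x
        - kantorovich n f x * kantorovich n g x)|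
      ≤ 2 * (x * (1 - x) + 1 / (24 * ((n : ℝ) + 1)))
          * supNorm (derivWithin f (Icc (0:ℝ) 1)) * supNorm (derivWithin g (Icc (0:ℝ) 1)) := by
  have := isProbabilityMeasure_kantorovichMeasure (n := n) hx
  set μ := kantorovichMeasure n x
  set Mf := supNorm (derivWithin f (Icc (0:ℝ) 1))
  set Mg := supNorm (derivWithin g (Icc (0:ℝ) 1))
  have hfL : MemLp f 2 μ := memLp_kantorovichMeasure hx hf.continuousOn 2
  have hgL : MemLp g 2 μ := memLp_kantorovichMeasure hx hg.continuousOn 2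
  have hcov : kantorovich n (fun t => f t * g t) x - kantorovich n f x * kantorovich n g x
      = cov[f, g; μ] := by
    rw [covariance_eq_sub hfL hgL,
      ← integral_kantorovichMeasure (u := fun t ↦ f t * g t) hx
        (hf.continuousOn.mul hg.continuousOn),
      ← integral_kantorovichMeasure hx hf.continuousOn,
      ← integral_kantorovichMeasure hx hg.continuousOn]
    rfl
  have hbound : |cov[f, g; μ]| ≤ Mf * Mg * Var[id; μ] := by
    simpa [Real.coe_toNNReal _ (supNorm_nonneg _)] using
      abs_covariance_comp_le_of_lipschitzOnWith (T := id) (convex_Icc 0 1) isClosed_Icc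
        ae_mem_unitInterval_kantorovichMeasure (memLp_kantorovichMeasure hx continuousOn_id 2)
        (lipschitzOnWith_supNorm_derivWithin hf) (lipschitzOnWith_supNorm_derivWithin hg) hfL hgL
  have hscale : n * Var[id; μ] ≤ 2 * (x * (1 - x) + 1 / (24 * ((n : ℝ) + 1))) := by
    have hx' : 0 ≤ x * (1 - x) := mul_nonneg hx.1 (sub_nonneg.mpr hx.2)
    have hgap : 2 * (x * (1 - x) + 1 / (24 * ((n : ℝ) + 1))) - n * Var[id; μ]
        = (x * (1 - x) * (n ^ 2 + 4 * n + 2) + 1 / 12) / ((n : ℝ) + 1) ^ 2 := by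
      rw [variance_id_kantorovichMeasure hx]; field_simp; ring
    rw [← sub_nonneg, hgap]
    positivity
  rw [hcov, abs_mul, Nat.abs_cast]
  calc (n : ℝ) * |cov[f, g; μ]| ≤ n * (Mf * Mg * Var[id; μ]) := by gcongr
    _ = Mf * Mg * (n * Var[id; μ]) := by ring
    _ ≤ Mf * Mg * (2 * (x * (1 - x) + 1 / (24 * ((n : ℝ) + 1)))) :=
        mul_le_mul_of_nonneg_left hscale (mul_nonneg (supNorm_nonneg _) (supNorm_nonneg _))
    _ = _ := by ring

theorem kantorovich_gruss_C1_pointwise (n : ℕ) (hn : 1 ≤ n)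
    (f g : ℝ → ℝ) (hf : ContDiffOn ℝ 1 f (Icc (0:ℝ) 1)) (hg : ContDiffOn ℝ 1 g (Icc (0:ℝ) 1))
    (x : ℝ) (hx : x ∈ Icc (0:ℝ) 1) :
    |(n : ℝ) * (kantorovich n (fun t => f t * g t) x
        - kantorovich n f x * kantorovich n g x)|
      ≤ 2 * (x * (1 - x) + 1 / (24 * ((n : ℝ) + 1)))
          * supNorm (derivWithin f (Icc (0:ℝ) 1)) * supNorm (derivWithin g (Icc (0:ℝ) 1)) :=
  kantorovich_gruss_C1_pointwise_general n f g hf hg x hx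
end

section
/- For f ∈ C^n[a,b], n ∈ ℕ, there is a constant C (depending only on n and [a,b]) such that max_{0 ≤ k ≤ n} ‖f^{(k)}‖_∞ ≤ C · max{‖f‖_∞, ‖f^{(n)}‖_∞}. -/
open Set
open scoped Nat

noncomputable def supNormOn (a b : ℝ) (f : ℝ → ℝ) : ℝ :=
  sSup {y | ∃ x ∈ Icc a b, y = |f x|}

lemma abs_le_supNormOn {a b : ℝ} (hab : a ≤ b) {f : ℝ → ℝ} (hf : ContinuousOn f (Icc a b))
    {x : ℝ} (hx : x ∈ Icc a b) : |f x| ≤ supNormOn a b f := by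
  have hset : {y | ∃ x ∈ Icc a b, y = |f x|} = (fun x => |f x|) '' Icc a b := by
    ext y; simp [eq_comm]
  apply le_csSup
  · rw [hset]
    exact (isCompact_Icc.image_of_continuousOn hf.abs).bddAbove
  · exact ⟨x, hx, rfl⟩

lemma supNormOn_le {a b C : ℝ} (hab : a ≤ b) {f : ℝ → ℝ}
    (h : ∀ x ∈ Icc a b, |f x| ≤ C) : supNormOn a b f ≤ C := by
  refine csSup_le ⟨|f a|, a, left_mem_Icc.2 hab, rfl⟩ ?_
  rintro y ⟨x, hx, rfl⟩
  exact h x hx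

lemma taylor_bound_two_sided {m : ℕ} {a b : ℝ} (hab : a < b) {f : ℝ → ℝ}
    (hf : ContDiffOn ℝ (m + 1) f (Icc a b)) {M : ℝ}
    (hM : ∀ y ∈ Icc a b, |iteratedDerivWithin (m + 1) f (Icc a b) y| ≤ M)
    {t x : ℝ} (ht : t ∈ Icc a b) (hx : x ∈ Icc a b) :
    |f x - taylorWithinEval f m (Icc a b) t x| ≤ ((m ! : ℝ)⁻¹ * (b - a) ^ m * M) * |x - t| := by
  have hs := uniqueDiffOn_Icc hab
  have hf' : DifferentiableOn ℝ (iteratedDerivWithin m f (Icc a b)) (Icc a b) :=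
    hf.differentiableOn_iteratedDerivWithin (by exact_mod_cast m.lt_succ_self) hs
  have hM0 : 0 ≤ M := le_trans (abs_nonneg _) (hM t ht)
  have hder : ∀ y ∈ Icc a b, HasDerivWithinAt (fun y => taylorWithinEval f m (Icc a b) y x)
      (((m ! : ℝ)⁻¹ * (x - y) ^ m) • iteratedDerivWithin (m + 1) f (Icc a b) y) (Icc a b) y :=
    fun y hy => hasDerivWithinAt_taylorWithinEval_at_Icc x hab hy hf.of_succ hf'
  have hbound : ∀ y ∈ Icc a b,
      ‖((m ! : ℝ)⁻¹ * (x - y) ^ m) • iteratedDerivWithin (m + 1) f (Icc a b) y‖ ≤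
        (m ! : ℝ)⁻¹ * (b - a) ^ m * M := by
    intro y hy
    have h1 : |x - y| ≤ b - a :=
      abs_sub_le_iff.2 ⟨by linarith [hx.2, hy.1], by linarith [hx.1, hy.2]⟩
    rw [smul_eq_mul, Real.norm_eq_abs, abs_mul, abs_mul, abs_pow, abs_inv, Nat.abs_cast]
    have h2 : |x - y| ^ m ≤ (b - a) ^ m := pow_le_pow_left₀ (abs_nonneg _) h1 m
    have h3 : |iteratedDerivWithin (m + 1) f (Icc a b) y| ≤ M := hM y hy
    have h4 : (0:ℝ) ≤ (m ! : ℝ)⁻¹ := by positivity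
    have hba : (0:ℝ) ≤ b - a := by linarith
    exact mul_le_mul (mul_le_mul le_rfl h2 (by positivity) h4) h3 (abs_nonneg _)
      (mul_nonneg h4 (pow_nonneg hba m))
  have hmv := (convex_Icc a b).norm_image_sub_le_of_norm_hasDerivWithin_le hder hbound ht hx
  simpa [Real.norm_eq_abs, taylorWithinEval_self] using hmv

lemma exists_vandermonde_coeffs (n : ℕ) (k : Fin n) :
    ∃ c : Fin n → ℝ, ∀ j : Fin n,
      ∑ i : Fin n, c i * (i : ℝ) ^ (j : ℕ) = if j = k then 1 else 0 := by
  have hdet : (Matrix.vandermonde (fun i : Fin n => (i : ℝ))).det ≠ 0 := by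
    rw [Matrix.det_vandermonde_ne_zero_iff]
    intro i j hij
    have h2 : ((i : ℕ) : ℝ) = ((j : ℕ) : ℝ) := hij
    exact Fin.val_injective (Nat.cast_injective h2)
  have hu : IsUnit (Matrix.vandermonde (fun i : Fin n => (i : ℝ))).transpose := by
    rw [Matrix.isUnit_iff_isUnit_det, Matrix.det_transpose, isUnit_iff_ne_zero]
    exact hdet
  have hsurj := Matrix.mulVec_surjective_iff_isUnit.2 hu
  obtain ⟨c, hc⟩ := hsurj (fun j => if j = k then 1 else 0)
  refine ⟨c, fun j => ?_⟩
  have := congrFun hc j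
  simpa [Matrix.mulVec, dotProduct, Matrix.transpose_apply, Matrix.vandermonde_apply,
    mul_comm] using this

lemma key {n k : ℕ} {a b : ℝ} (hab : a < b) (hk : k < n) :
    ∃ C : ℝ, ∀ f : ℝ → ℝ, ContDiffOn ℝ n f (Icc a b) → ∀ t ∈ Icc a b,
      |iteratedDerivWithin k f (Icc a b) t| ≤
        C * max (supNormOn a b f) (supNormOn a b (iteratedDerivWithin n f (Icc a b))) := by
  obtain ⟨m, rfl⟩ : ∃ m, n = m + 1 :=
    ⟨n - 1, (Nat.succ_pred_eq_of_pos (by omega)).symm⟩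
  obtain ⟨c, hc⟩ := exists_vandermonde_coeffs (m + 1) ⟨k, hk⟩
  set h : ℝ := (b - a) / (2 * (m + 1)) with hhdef
  have hba : (0:ℝ) < b - a := by linarith
  have hh0 : 0 < h := by positivity
  set K : ℝ := (m ! : ℝ)⁻¹ * (b - a) ^ m with hKdef
  have hK0 : 0 ≤ K := by positivity
  refine ⟨(∑ i : Fin (m+1), |c i|) * ((k ! : ℝ) / h ^ k) * (1 + K * (b - a)), ?_⟩
  intro f hf t ht
  have hf' : ContDiffOn ℝ ((m : ℕ∞) + 1) f (Icc a b) := by exact_mod_cast hf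
  set M0 := supNormOn a b f with hM0def
  set Mn := supNormOn a b (iteratedDerivWithin (m+1) f (Icc a b)) with hMndef
  have hM0 : ∀ y ∈ Icc a b, |f y| ≤ M0 := fun y hy =>
    abs_le_supNormOn hab.le hf.continuousOn hy
  have hMn : ∀ y ∈ Icc a b, |iteratedDerivWithin (m+1) f (Icc a b) y| ≤ Mn := fun y hy =>
    abs_le_supNormOn hab.le
      (hf.continuousOn_iteratedDerivWithin le_rfl (uniqueDiffOn_Icc hab)) hy
  have hMn0 : 0 ≤ Mn := le_trans (abs_nonneg _) (hMn a (left_mem_Icc.2 hab.le))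
  have hM00 : 0 ≤ M0 := le_trans (abs_nonneg _) (hM0 a (left_mem_Icc.2 hab.le))
  set Mx := max M0 Mn with hMxdef
  have hMx0 : 0 ≤ Mx := le_trans hM00 (le_max_left _ _)
  set ε : ℝ := if t ≤ (a + b) / 2 then h else -h with hεdef
  have hεabs : |ε| = h := by
    rw [hεdef]; split_ifs
    · exact abs_of_pos hh0
    · rw [abs_neg]; exact abs_of_pos hh0
  have hεne : ε ≠ 0 := by
    intro h0; rw [h0, abs_zero] at hεabs; exact hh0.ne' hεabs.symm
  have hih : ∀ i : Fin (m+1), (i:ℝ) * h ≤ (b - a) / 2 := by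
    intro i
    have h1 : (i:ℝ) ≤ (m:ℝ) + 1 := by exact_mod_cast i.isLt.le
    have h2 : (i:ℝ) * h ≤ ((m:ℝ)+1) * h := mul_le_mul_of_nonneg_right h1 hh0.le
    have h3 : ((m:ℝ)+1) * h = (b - a)/2 := by
      rw [hhdef]; field_simp
    linarith
  have hnode : ∀ i : Fin (m+1), t + (i:ℝ) * ε ∈ Icc a b := by
    intro i
    have hi0 : 0 ≤ (i:ℝ) * h := by positivity
    have hi := hih i
    rw [hεdef]
    by_cases htm : t ≤ (a + b)/2
    · rw [if_pos htm]
      exact ⟨by linarith [ht.1], by linarith⟩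
    · rw [if_neg htm]
      push_neg at htm
      have heq : t + (i:ℝ) * -h = t - (i:ℝ) * h := by ring
      rw [heq]
      exact ⟨by linarith, by linarith [ht.2]⟩
  have hR : ∀ i : Fin (m+1),
      |f (t + (i:ℝ)*ε) - taylorWithinEval f m (Icc a b) t (t + (i:ℝ)*ε)| ≤ K * Mn * (b - a) := by
    intro i
    have h1 := taylor_bound_two_sided hab hf' hMn ht (hnode i)
    have h2 : |t + (i:ℝ)*ε - t| ≤ b - a := by
      have heq : t + (i:ℝ)*ε - t = (i:ℝ)*ε := by ring
      rw [heq, abs_mul, hεabs, Nat.abs_cast]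
      linarith [hih i]
    calc |f (t + (i:ℝ)*ε) - taylorWithinEval f m (Icc a b) t (t + (i:ℝ)*ε)|
        ≤ ((m ! : ℝ)⁻¹ * (b - a) ^ m * Mn) * |t + (i:ℝ)*ε - t| := h1
      _ = (K * Mn) * |t + (i:ℝ)*ε - t| := by rw [hKdef]
      _ ≤ (K * Mn) * (b - a) := mul_le_mul_of_nonneg_left h2 (mul_nonneg hK0 hMn0)
  have hid : ∑ i : Fin (m+1),
      (c i * (k ! : ℝ) / ε ^ k) * taylorWithinEval f m (Icc a b) t (t + (i:ℝ)*ε)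
      = iteratedDerivWithin k f (Icc a b) t := by
    have expand : ∀ i : Fin (m+1), taylorWithinEval f m (Icc a b) t (t + (i:ℝ)*ε)
        = ∑ j : Fin (m+1), (((j:ℕ) ! : ℝ)⁻¹ * ((i:ℝ)*ε)^(j:ℕ)) *
            iteratedDerivWithin (j:ℕ) f (Icc a b) t := by
      intro i
      rw [taylor_within_apply, ← Fin.sum_univ_eq_sum_range
        (fun j => ((j ! : ℝ)⁻¹ * (t + (i:ℝ)*ε - t)^j) • iteratedDerivWithin j f (Icc a b) t)
        (m+1)]
      apply Finset.sum_congr rfl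
      intro j _
      have heq : t + (i:ℝ)*ε - t = (i:ℝ)*ε := by ring
      rw [smul_eq_mul, heq]
    have inner : ∀ j : Fin (m+1), ∑ i : Fin (m+1),
        (c i * (k ! : ℝ) / ε ^ k) * ((((j:ℕ) ! : ℝ)⁻¹ * ((i:ℝ)*ε)^(j:ℕ)) *
          iteratedDerivWithin (j:ℕ) f (Icc a b) t)
        = (if j = (⟨k, hk⟩ : Fin (m+1)) then 1 else 0) *
            (((k ! : ℝ)/ε^k) * ((((j:ℕ) !:ℝ))⁻¹ * ε^(j:ℕ) *
              iteratedDerivWithin (j:ℕ) f (Icc a b) t)) := by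
      intro j
      rw [← hc j, Finset.sum_mul]
      apply Finset.sum_congr rfl
      intro i _
      rw [mul_pow]
      ring
    calc ∑ i : Fin (m+1),
        (c i * (k ! : ℝ) / ε ^ k) * taylorWithinEval f m (Icc a b) t (t + (i:ℝ)*ε)
        = ∑ i : Fin (m+1), ∑ j : Fin (m+1),
            (c i * (k ! : ℝ) / ε ^ k) * ((((j:ℕ) ! : ℝ)⁻¹ * ((i:ℝ)*ε)^(j:ℕ)) *
              iteratedDerivWithin (j:ℕ) f (Icc a b) t) := by
          apply Finset.sum_congr rfl
          intro i _
          rw [expand i, Finset.mul_sum]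
      _ = ∑ j : Fin (m+1), ∑ i : Fin (m+1),
            (c i * (k ! : ℝ) / ε ^ k) * ((((j:ℕ) ! : ℝ)⁻¹ * ((i:ℝ)*ε)^(j:ℕ)) *
              iteratedDerivWithin (j:ℕ) f (Icc a b) t) := Finset.sum_comm
      _ = ∑ j : Fin (m+1), (if j = (⟨k, hk⟩ : Fin (m+1)) then 1 else 0) *
            (((k ! : ℝ)/ε^k) * ((((j:ℕ) !:ℝ))⁻¹ * ε^(j:ℕ) *
              iteratedDerivWithin (j:ℕ) f (Icc a b) t)) := by
          apply Finset.sum_congr rfl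
          intro j _
          exact inner j
      _ = iteratedDerivWithin k f (Icc a b) t := by
          simp only [ite_mul, one_mul, zero_mul, Finset.sum_ite_eq', Finset.mem_univ, if_true]
          have h1 : (ε:ℝ)^k ≠ 0 := pow_ne_zero _ hεne
          have h2 : ((k ! : ℝ)) ≠ 0 := Nat.cast_ne_zero.2 k.factorial_ne_zero
          field_simp
  have hsplit : iteratedDerivWithin k f (Icc a b) t
      = (∑ i : Fin (m+1), (c i * (k ! : ℝ)/ε^k) * f (t + (i:ℝ)*ε))
        - ∑ i : Fin (m+1), (c i * (k ! : ℝ)/ε^k) *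
            (f (t + (i:ℝ)*ε) - taylorWithinEval f m (Icc a b) t (t + (i:ℝ)*ε)) := by
    rw [← Finset.sum_sub_distrib, ← hid]
    apply Finset.sum_congr rfl
    intro i _
    ring
  have hd : ∀ i : Fin (m+1), |c i * (k ! : ℝ)/ε^k| = |c i| * ((k ! : ℝ)/h^k) := by
    intro i
    rw [abs_div, abs_mul, abs_pow, hεabs, Nat.abs_cast]
    ring
  set Q := (∑ i : Fin (m+1), |c i|) * ((k ! : ℝ) / h ^ k) with hQdef
  have hQ0 : 0 ≤ Q := by
    apply mul_nonneg (Finset.sum_nonneg fun i _ => abs_nonneg _)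
    positivity
  have hb1 : |∑ i : Fin (m+1), (c i * (k ! : ℝ)/ε^k) * f (t + (i:ℝ)*ε)| ≤ Q * M0 := by
    calc |∑ i : Fin (m+1), (c i * (k ! : ℝ)/ε^k) * f (t + (i:ℝ)*ε)|
        ≤ ∑ i : Fin (m+1), |(c i * (k ! : ℝ)/ε^k) * f (t + (i:ℝ)*ε)| :=
          Finset.abs_sum_le_sum_abs _ _
      _ ≤ ∑ i : Fin (m+1), (|c i| * ((k ! : ℝ)/h^k)) * M0 := by
          apply Finset.sum_le_sum
          intro i _
          rw [abs_mul, hd i]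
          exact mul_le_mul_of_nonneg_left (hM0 _ (hnode i))
            (mul_nonneg (abs_nonneg _) (by positivity))
      _ = Q * M0 := by rw [hQdef, ← Finset.sum_mul, ← Finset.sum_mul]
  have hb2 : |∑ i : Fin (m+1), (c i * (k ! : ℝ)/ε^k) *
      (f (t + (i:ℝ)*ε) - taylorWithinEval f m (Icc a b) t (t + (i:ℝ)*ε))|
      ≤ Q * (K * Mn * (b - a)) := by
    calc |∑ i : Fin (m+1), (c i * (k ! : ℝ)/ε^k) *
        (f (t + (i:ℝ)*ε) - taylorWithinEval f m (Icc a b) t (t + (i:ℝ)*ε))|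
        ≤ ∑ i : Fin (m+1), |(c i * (k ! : ℝ)/ε^k) *
            (f (t + (i:ℝ)*ε) - taylorWithinEval f m (Icc a b) t (t + (i:ℝ)*ε))| :=
          Finset.abs_sum_le_sum_abs _ _
      _ ≤ ∑ i : Fin (m+1), (|c i| * ((k ! : ℝ)/h^k)) * (K * Mn * (b - a)) := by
          apply Finset.sum_le_sum
          intro i _
          rw [abs_mul, hd i]
          exact mul_le_mul_of_nonneg_left (hR i)
            (mul_nonneg (abs_nonneg _) (by positivity))
      _ = Q * (K * Mn * (b - a)) := by rw [hQdef, ← Finset.sum_mul, ← Finset.sum_mul]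
  have hM0x : M0 ≤ Mx := le_max_left _ _
  have hMnx : Mn ≤ Mx := le_max_right _ _
  calc |iteratedDerivWithin k f (Icc a b) t|
      ≤ Q * M0 + Q * (K * Mn * (b - a)) := by
        rw [hsplit]
        refine le_trans (abs_sub _ _) (add_le_add hb1 hb2)
    _ ≤ Q * Mx + Q * (K * (b - a)) * Mx := by
        have e1 : Q * M0 ≤ Q * Mx := mul_le_mul_of_nonneg_left hM0x hQ0
        have e2 : Q * (K * Mn * (b - a)) ≤ Q * (K * (b - a)) * Mx := by
          have : K * Mn * (b - a) ≤ (K * (b - a)) * Mx := by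
            have := mul_le_mul_of_nonneg_left hMnx (mul_nonneg hK0 hba.le)
            nlinarith [this]
          calc Q * (K * Mn * (b - a)) ≤ Q * ((K * (b - a)) * Mx) :=
                mul_le_mul_of_nonneg_left this hQ0
            _ = Q * (K * (b - a)) * Mx := by ring
        linarith
    _ = Q * (1 + K * (b - a)) * Mx := by ring

theorem landau_kolmogorov_type (n : ℕ) (a b : ℝ) (hab : a < b) :
    ∃ C : ℝ, ∀ f : ℝ → ℝ, ContDiffOn ℝ n f (Icc a b) →
      ∀ k ≤ n, supNormOn a b (iteratedDerivWithin k f (Icc a b))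
        ≤ C * max (supNormOn a b f) (supNormOn a b (iteratedDerivWithin n f (Icc a b))) := by
  have H : ∀ k : ℕ, ∃ C : ℝ, ∀ f : ℝ → ℝ, ContDiffOn ℝ n f (Icc a b) → k ≤ n →
      supNormOn a b (iteratedDerivWithin k f (Icc a b)) ≤
        C * max (supNormOn a b f) (supNormOn a b (iteratedDerivWithin n f (Icc a b))) := by
    intro k
    rcases lt_or_ge k n with hk | hk
    · obtain ⟨C, hC⟩ := key hab hk
      exact ⟨C, fun f hf _ => supNormOn_le hab.le (fun t ht => hC f hf t ht)⟩
    · refine ⟨1, fun f hf hkn => ?_⟩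
      have hkn' : k = n := le_antisymm hkn hk
      subst hkn'
      rw [one_mul]
      exact le_max_right _ _
  choose g hg using H
  refine ⟨∑ k ∈ Finset.range (n+1), |g k|, ?_⟩
  intro f hf k hk
  have h1 := hg k f hf hk
  have hmax0 : 0 ≤ max (supNormOn a b f)
      (supNormOn a b (iteratedDerivWithin n f (Icc a b))) := by
    have h2 := abs_le_supNormOn hab.le hf.continuousOn (left_mem_Icc.2 hab.le)
    exact le_trans (le_trans (abs_nonneg _) h2) (le_max_left _ _)
  refine le_trans h1 (mul_le_mul_of_nonneg_right ?_ hmax0)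
  calc g k ≤ |g k| := le_abs_self _
    _ ≤ ∑ j ∈ Finset.range (n+1), |g j| :=
        Finset.single_le_sum (fun i _ => abs_nonneg (g i))
          (Finset.mem_range.2 (Nat.lt_succ_of_le hk))
end
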